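/- Let g : ℝ → ℝ be twice continuously differentiable with |g′(x)| ≤ C and |g″(x)| ≤ C′ for all x ∈ ℝ, and let α : ℝ × ℝ → ℝ be three times continuously differentiable (jointly in (y,z)) and satisfy the Doss ODE ∂α/∂z(y,z) = g(α(y,z)) for all (y,z) ∈ ℝ × ℝ, with initial condition α(y,0) = y for all y ∈ ℝ. Suppose h : ℝ × ℝ → ℝ is twice continuously differentiable and satisfies α(h(y,z),z) = y for all (y,z) ∈ ℝ × ℝ. Then for all (y,z) ∈ ℝ × ℝ, ∂²h/∂y²(y,z) = − ∂²α/∂y²(h(y,z),z) / (∂α/∂y(h(y,z),z))³; in particular there exists a constant C₀ > 0, depending only on C and C′, such that |∂²h/∂y²(y,z)| ≤ exp(C₀|z|). -/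

import Mathlib

/-!
Write `u = ∂α/∂y` and `w = ∂²α/∂y²`. Differentiating the Doss equation in `y` (symmetry of
second derivatives) gives the linear equations `∂u/∂z = g'(α) u` and
`∂w/∂z = g'(α) w + g''(α) u²`, with `u (y, 0) = 1` and `w (y, 0) = 0`. Hence
`u = exp ∫₀ᶻ g'(α)` lies between `exp (-C|z|)` and `exp (C|z|)`, and the integrating factor
bounds `|w| ≤ C'|z| exp (4C|z|)`. Differentiating `α (h (y, z), z) = y` twice in `y` gives
`∂²h/∂y² = -w / u³` at `(h (y, z), z)`, which is at most `C'|z| exp (7C|z|)`.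
-/
open Real Function

section Slices

variable {𝕜 E : Type*} [NontriviallyNormedField 𝕜] [NormedAddCommGroup E] [NormedSpace 𝕜 E]
  {f : 𝕜 × 𝕜 → E} {f' : 𝕜 × 𝕜 →L[𝕜] E} {p : 𝕜 × 𝕜}

theorem HasFDerivAt.hasDerivAt_slice_fst (hf : HasFDerivAt f f' p) :
    HasDerivAt (fun y => f (y, p.2)) (f' (1, 0)) p.1 := by
  obtain ⟨y, z⟩ := p
  exact (hf.comp y (hasFDerivAt_prodMk_left y z)).hasDerivAt

theorem HasFDerivAt.hasDerivAt_slice_snd (hf : HasFDerivAt f f' p) :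
    HasDerivAt (fun z => f (p.1, z)) (f' (0, 1)) p.2 := by
  obtain ⟨y, z⟩ := p
  exact (hf.comp z (hasFDerivAt_prodMk_right y z)).hasDerivAt

end Slices

/-- `∂f/∂y` in the paper's notation. -/
noncomputable def partialFst (f : ℝ × ℝ → ℝ) (p : ℝ × ℝ) : ℝ :=
  deriv (fun y => f (y, p.2)) p.1

section PartialFst

variable {f : ℝ × ℝ → ℝ} {p : ℝ × ℝ}

theorem hasDerivAt_partialFst (hf : DifferentiableAt ℝ f p) :
    HasDerivAt (fun y => f (y, p.2)) (partialFst f p) p.1 :=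
  (hf.hasFDerivAt.hasDerivAt_slice_fst).differentiableAt.hasDerivAt

theorem partialFst_eq_fderiv (hf : Differentiable ℝ f) :
    partialFst f = fun q => fderiv ℝ f q (1, 0) :=
  funext fun q => (hf q).hasFDerivAt.hasDerivAt_slice_fst.deriv

theorem contDiff_partialFst {n : WithTop ℕ∞} (hf : ContDiff ℝ (n + 1) f) :
    ContDiff ℝ n (partialFst f) := by
  rw [partialFst_eq_fderiv (hf.differentiable (by simp))]
  exact (hf.fderiv_right le_rfl).clm_apply contDiff_const

/-- By symmetry of the second derivative of `f`. -/
theorem hasDerivAt_snd_partialFst {G : ℝ × ℝ → ℝ} {G' : ℝ} (hf : ContDiff ℝ 2 f)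
    (hG : ∀ q : ℝ × ℝ, HasDerivAt (fun z => f (q.1, z)) (G q) q.2)
    (hG' : HasDerivAt (fun y => G (y, p.2)) G' p.1) :
    HasDerivAt (fun z => partialFst f (p.1, z)) G' p.2 := by
  have hf' : DifferentiableAt ℝ (fderiv ℝ f) p :=
    (hf.fderiv_right (m := 1) le_rfl).differentiable one_ne_zero p
  have hdir (v : ℝ × ℝ) : HasFDerivAt (fun q => fderiv ℝ f q v)
      ((fderiv ℝ (fderiv ℝ f) p).flip v) p := by
    simpa using hf'.hasFDerivAt.clm_apply (hasFDerivAt_const v p)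
  have hG_eq : G = fun q => fderiv ℝ f q (0, 1) := funext fun q =>
    (hG q).unique ((hf.differentiable two_ne_zero q).hasFDerivAt.hasDerivAt_slice_snd)
  have hsymm := (hf.contDiffAt (x := p)).isSymmSndFDerivAt (by simp) (0, 1) (1, 0)
  have hG'_eq : G' = fderiv ℝ (fderiv ℝ f) p (1, 0) (0, 1) := by
    subst hG_eq
    exact hG'.unique (hdir (0, 1)).hasDerivAt_slice_fst
  rw [partialFst_eq_fderiv (hf.differentiable two_ne_zero), hG'_eq, ← hsymm]
  exact (hdir (1, 0)).hasDerivAt_slice_snd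

end PartialFst

section LinearODE

variable {a b f : ℝ → ℝ}

theorem hasDerivAt_mul_exp_neg_integral (ha : Continuous a) {t : ℝ}
    (hf : HasDerivAt f (a t * f t + b t) t) :
    HasDerivAt (fun r => f r * exp (-∫ τ in (0 : ℝ)..r, a τ))
      (b t * exp (-∫ τ in (0 : ℝ)..t, a τ)) t := by
  have hφ := (ha.integral_hasStrictDerivAt 0 t).hasDerivAt
  exact (hf.mul hφ.neg.exp).congr_deriv (by simp only [Pi.neg_apply]; ring)

theorem eq_mul_exp_integral_of_hasDerivAt (ha : Continuous a)
    (hf : ∀ t, HasDerivAt f (a t * f t) t) (s : ℝ) :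
    f s = f 0 * exp (∫ τ in (0 : ℝ)..s, a τ) := by
  have hF (t : ℝ) := hasDerivAt_mul_exp_neg_integral (b := 0) ha (by simpa using hf t)
  have hconst := is_const_of_deriv_eq_zero (fun t => (hF t).differentiableAt)
    (fun t => by simpa using (hF t).deriv) s 0
  simp only [intervalIntegral.integral_same, neg_zero, exp_zero, mul_one] at hconst
  rw [← hconst, mul_assoc, ← exp_add, neg_add_cancel, exp_zero, mul_one]

theorem abs_integral_le_of_abs_le {C : ℝ} (haC : ∀ t, |a t| ≤ C) (s : ℝ) :
    |∫ τ in (0 : ℝ)..s, a τ| ≤ C * |s| := by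
  simpa using intervalIntegral.norm_integral_le_of_norm_le_const (f := a) (a := 0) (b := s)
    fun t _ => (haC t : ‖a t‖ ≤ C)

/-- Via the integrating factor `exp (-∫₀ᵗ a)`. -/
theorem abs_le_of_hasDerivAt_linear {B C s : ℝ} (ha : Continuous a) (haC : ∀ t, |a t| ≤ C)
    (hbB : ∀ t ∈ Set.uIcc 0 s, |b t| ≤ B) (hf : ∀ t, HasDerivAt f (a t * f t + b t) t) :
    |f s| ≤ (|f 0| + B * |s|) * exp (2 * C * |s|) := by
  set φ := fun r => ∫ τ in (0 : ℝ)..r, a τ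
  have hC : 0 ≤ C := (abs_nonneg _).trans (haC 0)
  have hB : 0 ≤ B := (abs_nonneg _).trans (hbB 0 Set.left_mem_uIcc)
  have hφ (t : ℝ) (ht : t ∈ Set.uIcc 0 s) : |φ t| ≤ C * |s| := by
    have := Set.abs_sub_left_of_mem_uIcc ht
    rw [sub_zero, sub_zero] at this
    exact (abs_integral_le_of_abs_le haC t).trans (mul_le_mul_of_nonneg_left this hC)
  have hderiv (t : ℝ) (ht : t ∈ Set.uIcc 0 s) :
      ‖b t * exp (-φ t)‖ ≤ B * exp (C * |s|) := by
    rw [norm_mul, Real.norm_eq_abs, Real.norm_eq_abs, abs_exp]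
    exact mul_le_mul (hbB t ht) (exp_le_exp.2 ((neg_le_abs _).trans (hφ t ht)))
      (exp_pos _).le hB
  have hmvt := (convex_uIcc (0 : ℝ) s).norm_image_sub_le_of_norm_hasDerivWithin_le
    (fun t _ => (hasDerivAt_mul_exp_neg_integral ha (hf t)).hasDerivWithinAt) hderiv
    Set.left_mem_uIcc Set.right_mem_uIcc
  simp only [intervalIntegral.integral_same, neg_zero, exp_zero, mul_one, sub_zero,
    Real.norm_eq_abs] at hmvt
  have hfs : |f s| = |f s * exp (-φ s)| * exp (φ s) := by
    rw [abs_mul, abs_exp, mul_assoc, ← exp_add, neg_add_cancel, exp_zero, mul_one]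
  have h1 : 1 ≤ exp (C * |s|) := one_le_exp (by positivity)
  calc |f s| = |f s * exp (-φ s)| * exp (φ s) := hfs
    _ ≤ (|f 0| + B * exp (C * |s|) * |s|) * exp (C * |s|) := by
        gcongr
        · linarith [abs_sub_abs_le_abs_sub (f s * exp (-φ s)) (f 0)]
        · exact le_of_abs_le (hφ s Set.right_mem_uIcc)
    _ ≤ (|f 0| + B * |s|) * exp (C * |s|) * exp (C * |s|) := by
        gcongr
        nlinarith [abs_nonneg (f 0), mul_nonneg hB (abs_nonneg s)]
    _ = (|f 0| + B * |s|) * exp (2 * C * |s|) := by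
        rw [mul_assoc, ← exp_add]; ring_nf

end LinearODE

section InverseFunction

variable {F H : ℝ → ℝ}

theorem deriv_comp_mul_deriv_eq_one (hF : Differentiable ℝ F) (hH : Differentiable ℝ H)
    (hFH : LeftInverse F H) (y : ℝ) : deriv F (H y) * deriv H y = 1 := by
  have hcomp := (hF (H y)).hasDerivAt.comp y (hH y).hasDerivAt
  rw [show F ∘ H = id from funext hFH] at hcomp
  exact hcomp.unique (hasDerivAt_id y)

theorem iteratedDeriv_two_of_leftInverse (hF : Differentiable ℝ F)
    (hF' : Differentiable ℝ (deriv F)) (hH : Differentiable ℝ H) (hFH : LeftInverse F H)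
    (y : ℝ) : iteratedDeriv 2 H y = -(iteratedDeriv 2 F (H y) / deriv F (H y) ^ 3) := by
  have hone := deriv_comp_mul_deriv_eq_one hF hH hFH
  have hne (y : ℝ) : deriv F (H y) ≠ 0 := left_ne_zero_of_mul_eq_one (hone y)
  have hderivH : deriv H = fun y => (deriv F (H y))⁻¹ :=
    funext fun y => (inv_eq_of_mul_eq_one_right (hone y)).symm
  have h2 := ((hF' (H y)).hasDerivAt.comp y (hH y).hasDerivAt).inv (hne y)
  rw [iteratedDeriv_succ, iteratedDeriv_one, iteratedDeriv_succ, iteratedDeriv_one, hderivH]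
  refine h2.deriv.trans ?_
  rw [congrFun hderivH y, comp_apply]
  field_simp

end InverseFunction

theorem mul_mul_exp_le_exp {A c s : ℝ} (hs : 0 ≤ s) :
    A * s * exp (c * s) ≤ exp ((|A| + |c|) * s) := by
  calc A * s * exp (c * s) ≤ exp (|A| * s) * exp (|c| * s) := by
        gcongr
        · exact (mul_le_mul_of_nonneg_right (le_abs_self A) hs).trans
            ((le_add_of_nonneg_right zero_le_one).trans (add_one_le_exp _))
        · exact le_abs_self c
    _ = exp ((|A| + |c|) * s) := by rw [← exp_add, add_mul]

structure IsDossFlow (g : ℝ → ℝ) (α : ℝ × ℝ → ℝ) : Prop where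
  hasDerivAt_snd : ∀ y z : ℝ, HasDerivAt (fun z' => α (y, z')) (g (α (y, z))) z
  map_zero : ∀ y : ℝ, α (y, 0) = y

namespace IsDossFlow

variable {g : ℝ → ℝ} {α : ℝ × ℝ → ℝ} {C C' : ℝ}

theorem partialFst_map_zero (hα : IsDossFlow g α) (y : ℝ) : partialFst α (y, 0) = 1 := by
  simp [partialFst, hα.map_zero]

theorem partialFst_partialFst_map_zero (hα : IsDossFlow g α) (y : ℝ) :
    partialFst (partialFst α) (y, 0) = 0 := by
  change deriv (fun y' => partialFst α (y', 0)) y = 0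
  simp [hα.partialFst_map_zero]

theorem hasDerivAt_snd_partialFst (hα : IsDossFlow g α) (hg : Differentiable ℝ g)
    (hα2 : ContDiff ℝ 2 α) (y z : ℝ) :
    HasDerivAt (fun z' => partialFst α (y, z')) (deriv g (α (y, z)) * partialFst α (y, z)) z :=
  _root_.hasDerivAt_snd_partialFst (p := (y, z)) hα2 (fun q => hα.hasDerivAt_snd q.1 q.2)
    ((hg _).hasDerivAt.comp y
      (hasDerivAt_partialFst (p := (y, z)) (hα2.differentiable two_ne_zero _)))

theorem hasDerivAt_snd_partialFst_partialFst (hα : IsDossFlow g α) (hg : ContDiff ℝ 2 g)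
    (hα3 : ContDiff ℝ 3 α) (y z : ℝ) :
    HasDerivAt (fun z' => partialFst (partialFst α) (y, z'))
      (deriv g (α (y, z)) * partialFst (partialFst α) (y, z) +
        iteratedDeriv 2 g (α (y, z)) * partialFst α (y, z) ^ 2) z := by
  have hα2 : ContDiff ℝ 2 α := hα3.of_le (by norm_num)
  have hu : ContDiff ℝ 2 (partialFst α) := contDiff_partialFst hα3
  have hg' : Differentiable ℝ (deriv g) := (hg.deriv' (n := 1)).differentiable one_ne_zero
  have hG' := ((hg' _).hasDerivAt.comp y
      (hasDerivAt_partialFst (p := (y, z)) (hα2.differentiable two_ne_zero _))).mul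
    (hasDerivAt_partialFst (p := (y, z)) (hu.differentiable two_ne_zero _))
  refine _root_.hasDerivAt_snd_partialFst (p := (y, z)) hu
    (fun q => hα.hasDerivAt_snd_partialFst (hg.differentiable two_ne_zero) hα2 q.1 q.2)
    (hG'.congr_deriv ?_)
  rw [iteratedDeriv_succ, iteratedDeriv_one, comp_apply]
  ring

theorem continuous_deriv_comp_slice (hg : ContDiff ℝ 1 g) (hα : Continuous α) (y : ℝ) :
    Continuous fun t => deriv g (α (y, t)) :=
  (hg.continuous_deriv le_rfl).comp (hα.comp (continuous_const.prodMk continuous_id))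

theorem partialFst_eq_exp (hα : IsDossFlow g α) (hg : ContDiff ℝ 1 g) (hα2 : ContDiff ℝ 2 α)
    (y z : ℝ) : partialFst α (y, z) = exp (∫ t in (0 : ℝ)..z, deriv g (α (y, t))) := by
  simpa [hα.partialFst_map_zero] using eq_mul_exp_integral_of_hasDerivAt
    (continuous_deriv_comp_slice hg hα2.continuous y)
    (hα.hasDerivAt_snd_partialFst (hg.differentiable one_ne_zero) hα2 y) z

theorem partialFst_pos (hα : IsDossFlow g α) (hg : ContDiff ℝ 1 g) (hα2 : ContDiff ℝ 2 α)
    (y z : ℝ) : 0 < partialFst α (y, z) := by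
  rw [hα.partialFst_eq_exp hg hα2]
  exact exp_pos _

theorem partialFst_le_exp (hα : IsDossFlow g α) (hg : ContDiff ℝ 1 g) (hα2 : ContDiff ℝ 2 α)
    (hgC : ∀ x, |deriv g x| ≤ C) (y z : ℝ) : partialFst α (y, z) ≤ exp (C * |z|) := by
  rw [hα.partialFst_eq_exp hg hα2]
  exact exp_le_exp.2 (le_of_abs_le (abs_integral_le_of_abs_le (fun t => hgC _) z))

theorem inv_partialFst_le_exp (hα : IsDossFlow g α) (hg : ContDiff ℝ 1 g)
    (hα2 : ContDiff ℝ 2 α) (hgC : ∀ x, |deriv g x| ≤ C) (y z : ℝ) :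
    (partialFst α (y, z))⁻¹ ≤ exp (C * |z|) := by
  rw [hα.partialFst_eq_exp hg hα2, ← exp_neg]
  exact exp_le_exp.2 ((neg_le_abs _).trans (abs_integral_le_of_abs_le (fun t => hgC _) z))

theorem abs_partialFst_partialFst_le (hα : IsDossFlow g α) (hg : ContDiff ℝ 2 g)
    (hα3 : ContDiff ℝ 3 α) (hgC : ∀ x, |deriv g x| ≤ C)
    (hgC' : ∀ x, |iteratedDeriv 2 g x| ≤ C') (y z : ℝ) :
    |partialFst (partialFst α) (y, z)| ≤ C' * |z| * exp (4 * C * |z|) := by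
  have hα2 : ContDiff ℝ 2 α := hα3.of_le (by norm_num)
  have hg1 : ContDiff ℝ 1 g := hg.of_le (by norm_num)
  have hC : 0 ≤ C := (abs_nonneg _).trans (hgC 0)
  have hC' : 0 ≤ C' := (abs_nonneg _).trans (hgC' 0)
  have hsource (t : ℝ) (ht : t ∈ Set.uIcc 0 z) :
      |iteratedDeriv 2 g (α (y, t)) * partialFst α (y, t) ^ 2| ≤ C' * exp (2 * C * |z|) := by
    have htz : |t| ≤ |z| := by simpa using Set.abs_sub_left_of_mem_uIcc ht
    have hu := hα.partialFst_le_exp hg1 hα2 hgC y t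
    have hu0 := (hα.partialFst_pos hg1 hα2 y t).le
    calc |iteratedDeriv 2 g (α (y, t)) * partialFst α (y, t) ^ 2|
        ≤ C' * exp (C * |t|) ^ 2 := by
          rw [abs_mul, abs_pow, abs_of_nonneg hu0]
          gcongr
          exact hgC' _
      _ = C' * exp (2 * C * |t|) := by rw [← exp_nat_mul]; push_cast; ring_nf
      _ ≤ C' * exp (2 * C * |z|) := by gcongr
  have hbound := abs_le_of_hasDerivAt_linear (continuous_deriv_comp_slice hg1 hα2.continuous y)
    (fun t => hgC _) hsource (hα.hasDerivAt_snd_partialFst_partialFst hg hα3 y)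
  rw [hα.partialFst_partialFst_map_zero, abs_zero, zero_add] at hbound
  calc _ ≤ C' * exp (2 * C * |z|) * |z| * exp (2 * C * |z|) := hbound
    _ = C' * |z| * exp (4 * C * |z|) := by
        rw [show 4 * C * |z| = 2 * C * |z| + 2 * C * |z| by ring, exp_add]
        ring

theorem abs_partialFst_partialFst_div_pow_three_le (hα : IsDossFlow g α)
    (hg : ContDiff ℝ 2 g) (hα3 : ContDiff ℝ 3 α) (hgC : ∀ x, |deriv g x| ≤ C)
    (hgC' : ∀ x, |iteratedDeriv 2 g x| ≤ C') (y z : ℝ) :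
    |partialFst (partialFst α) (y, z) / partialFst α (y, z) ^ 3| ≤
      C' * |z| * exp (7 * C * |z|) := by
  have hα2 : ContDiff ℝ 2 α := hα3.of_le (by norm_num)
  have hg1 : ContDiff ℝ 1 g := hg.of_le (by norm_num)
  have hu_inv := inv_nonneg.2 (hα.partialFst_pos hg1 hα2 y z).le
  have hw_le := hα.abs_partialFst_partialFst_le hg hα3 hgC hgC' y z
  rw [abs_div, abs_pow, div_eq_mul_inv, ← inv_pow,
    abs_of_pos (hα.partialFst_pos hg1 hα2 y z)]
  calc _ ≤ C' * |z| * exp (4 * C * |z|) * exp (C * |z|) ^ 3 :=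
        mul_le_mul hw_le (pow_le_pow_left₀ hu_inv (hα.inv_partialFst_le_exp hg1 hα2 hgC y z) 3)
          (pow_nonneg hu_inv 3) ((abs_nonneg _).trans hw_le)
    _ = C' * |z| * exp (7 * C * |z|) := by
        rw [← exp_nat_mul, mul_assoc, ← exp_add]; push_cast; ring_nf

end IsDossFlow

/-- If `g` is `C²` with `|g'| ≤ C`, `|g''| ≤ C'`, `α` is `C³` and
solves the Doss ODE `∂α/∂z (y,z) = g (α (y,z))`, `α (y,0) = y`, and `h` is a `C²`
`y`-inverse of `α`, i.e. `α (h (y,z), z) = y`, then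
`∂²h/∂y² (y,z) = - ∂²α/∂y² (h (y,z), z) / (∂α/∂y (h (y,z), z))³`, and there is a
constant `C₀ > 0`, depending only on `C` and `C'`, with
`|∂²h/∂y² (y,z)| ≤ exp (C₀|z|)`. -/
theorem stmt_10 (C C' : ℝ) :
    ∃ C₀ > 0, ∀ g : ℝ → ℝ, ContDiff ℝ 2 g →
      (∀ x : ℝ, |deriv g x| ≤ C) → (∀ x : ℝ, |iteratedDeriv 2 g x| ≤ C') →
      ∀ α : ℝ × ℝ → ℝ, ContDiff ℝ 3 α →
      (∀ y z : ℝ, HasDerivAt (fun z' => α (y, z')) (g (α (y, z))) z) →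
      (∀ y : ℝ, α (y, 0) = y) →
      ∀ h : ℝ × ℝ → ℝ, ContDiff ℝ 2 h →
      (∀ y z : ℝ, α (h (y, z), z) = y) →
      ∀ y z : ℝ,
        iteratedDeriv 2 (fun y' => h (y', z)) y =
          -(iteratedDeriv 2 (fun y' => α (y', z)) (h (y, z)) /
            (deriv (fun y' => α (y', z)) (h (y, z))) ^ 3) ∧
        |iteratedDeriv 2 (fun y' => h (y', z)) y| ≤ Real.exp (C₀ * |z|) := by
  refine ⟨7 * |C| + |C'| + 1, by positivity, ?_⟩
  intro g hg hgC hgC' α hα hode hinit h hh hinv y z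
  have hflow : IsDossFlow g α := ⟨hode, hinit⟩
  have hα2 : ContDiff ℝ 2 α := hα.of_le (by norm_num)
  have hαd : Differentiable ℝ α := hα.differentiable (by norm_num)
  have hud : Differentiable ℝ (partialFst α) :=
    (contDiff_partialFst (n := 1) hα2).differentiable one_ne_zero
  have hhd : Differentiable ℝ h := hh.differentiable two_ne_zero
  have hformula := iteratedDeriv_two_of_leftInverse (F := fun y' => α (y', z))
    (H := fun y' => h (y', z)) (by fun_prop) (by fun_prop) (by fun_prop) (fun y' => hinv y' z) y
  refine ⟨hformula, ?_⟩
  set x := h (y, z)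
  have hw : iteratedDeriv 2 (fun y' => α (y', z)) x = partialFst (partialFst α) (x, z) := by
    rw [iteratedDeriv_succ, iteratedDeriv_one]; rfl
  have hu : deriv (fun y' => α (y', z)) x = partialFst α (x, z) := rfl
  rw [hformula, hw, hu, abs_neg]
  calc _ ≤ C' * |z| * exp (7 * C * |z|) :=
        hflow.abs_partialFst_partialFst_div_pow_three_le hg hα hgC hgC' x z
    _ ≤ exp ((|C'| + |7 * C|) * |z|) := mul_mul_exp_le_exp (abs_nonneg z)
    _ ≤ exp ((7 * |C| + |C'| + 1) * |z|) := by
        have h7 : |7 * C| = 7 * |C| := by rw [abs_mul]; norm_num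
        exact exp_le_exp.2 (mul_le_mul_of_nonneg_right (by linarith) (abs_nonneg z))
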